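/- Every model of ZFU_R that satisfies every instance of the DC_ω-scheme and every instance of the Collection scheme also satisfies every instance of the reflection scheme RP. -/

import Mathlib

set_option linter.unusedVariables false
namespace Urelements

/-- First-order formulas of the language of urelement set theory, with a binary
relation `∈` (`mem`), equality, and a unary predicate `𝒜` (`ur`), using de Bruijn
variables `Fin n`. -/
inductive Fml : ℕ → Type
  | mem {n : ℕ} : Fin n → Fin n → Fml n
  | eq  {n : ℕ} : Fin n → Fin n → Fml n
  | ur  {n : ℕ} : Fin n → Fml n
  | not {n : ℕ} : Fml n → Fml n
  | and {n : ℕ} : Fml n → Fml n → Fml n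
  | ex  {n : ℕ} : Fml (n + 1) → Fml n

/-- Tarskian satisfaction of a formula in the structure `(M, E, A)`. -/
def Realize {M : Type} (E : M → M → Prop) (A : M → Prop) :
    ∀ {n : ℕ}, Fml n → (Fin n → M) → Prop
  | _, .mem i j, v => E (v i) (v j)
  | _, .eq i j, v => v i = v j
  | _, .ur i, v => A (v i)
  | _, .not φ, v => ¬ Realize E A φ v
  | _, .and φ ψ, v => Realize E A φ v ∧ Realize E A ψ v
  | _, .ex φ, v => ∃ x, Realize E A φ (Fin.snoc v x)

/-- Satisfaction of `φ` relativized to the members of `t`: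
all quantifiers range over `{x | E x t}`. -/
def RealizeIn {M : Type} (E : M → M → Prop) (A : M → Prop) (t : M) :
    ∀ {n : ℕ}, Fml n → (Fin n → M) → Prop
  | _, .mem i j, v => E (v i) (v j)
  | _, .eq i j, v => v i = v j
  | _, .ur i, v => A (v i)
  | _, .not φ, v => ¬ RealizeIn E A t φ v
  | _, .and φ ψ, v => RealizeIn E A t φ v ∧ RealizeIn E A t ψ v
  | _, .ex φ, v => ∃ x, E x t ∧ RealizeIn E A t φ (Fin.snoc v x)

/- ### The axioms of urelement set theory -/

/-- Axiom 𝒜: urelements have no members. -/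
def AxiomA {M : Type} (E : M → M → Prop) (A : M → Prop) : Prop :=
  ∀ x, A x → ∀ y, ¬ E y x

/-- Extensionality for sets. -/
def Extensionality {M : Type} (E : M → M → Prop) (A : M → Prop) : Prop :=
  ∀ x y, ¬ A x → ¬ A y → (∀ z, E z x ↔ E z y) → x = y

def Foundation {M : Type} (E : M → M → Prop) (A : M → Prop) : Prop :=
  ∀ x, (∃ y, E y x) → ∃ z, E z x ∧ ∀ w, E w z → ¬ E w x

def Pairing {M : Type} (E : M → M → Prop) (A : M → Prop) : Prop :=
  ∀ x y, ∃ z, ∀ v, E v z ↔ (v = x ∨ v = y)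

def UnionAx {M : Type} (E : M → M → Prop) (A : M → Prop) : Prop :=
  ∀ x, ∃ y, ∀ z, E z y ↔ ∃ w, E w x ∧ E z w

def PowersetAx {M : Type} (E : M → M → Prop) (A : M → Prop) : Prop :=
  ∀ x, ∃ y, ∀ z, E z y ↔ (¬ A z ∧ ∀ w, E w z → E w x)

def InfinityAx {M : Type} (E : M → M → Prop) (A : M → Prop) : Prop :=
  ∃ s, (∃ y, E y s ∧ ¬ A y ∧ ∀ z, ¬ E z y) ∧
    ∀ x, E x s → ∃ u, E u s ∧ ∀ v, E v u ↔ (E v x ∨ v = x)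

/-- The Separation scheme: for every first-order formula `φ(z, u₁, …, uₙ)`. -/
def SeparationScheme {M : Type} (E : M → M → Prop) (A : M → Prop) : Prop :=
  ∀ (n : ℕ) (φ : Fml (n + 1)) (p : Fin n → M) (x : M),
    ∃ y, ∀ z, E z y ↔ (E z x ∧ Realize E A φ (Fin.snoc p z))

/-- The Replacement scheme. -/
def ReplacementScheme {M : Type} (E : M → M → Prop) (A : M → Prop) : Prop :=
  ∀ (n : ℕ) (φ : Fml (n + 2)) (p : Fin n → M) (w : M),
    (∀ x, E x w → ∃! y, Realize E A φ (Fin.snoc (Fin.snoc p x) y)) →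
    ∃ v, ∀ x, E x w → ∃ y, E y v ∧ Realize E A φ (Fin.snoc (Fin.snoc p x) y)

/-- The Collection scheme. -/
def CollectionScheme {M : Type} (E : M → M → Prop) (A : M → Prop) : Prop :=
  ∀ (n : ℕ) (φ : Fml (n + 2)) (p : Fin n → M) (w : M),
    (∀ x, E x w → ∃ y, Realize E A φ (Fin.snoc (Fin.snoc p x) y)) →
    ∃ v, ∀ x, E x w → ∃ y, E y v ∧ Realize E A φ (Fin.snoc (Fin.snoc p x) y)

/-- The theory ZU. -/
def ZU {M : Type} (E : M → M → Prop) (A : M → Prop) : Prop :=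
  AxiomA E A ∧ Extensionality E A ∧ Foundation E A ∧ Pairing E A ∧ UnionAx E A ∧
    PowersetAx E A ∧ InfinityAx E A ∧ SeparationScheme E A

/-- ZFU_R = ZU + Replacement. -/
def ZFUR {M : Type} (E : M → M → Prop) (A : M → Prop) : Prop :=
  ZU E A ∧ ReplacementScheme E A

/- ### Internal set-theoretic notions -/

/-- `t` is a transitive set. -/
def TransSet {M : Type} (E : M → M → Prop) (A : M → Prop) (t : M) : Prop :=
  ¬ A t ∧ ∀ y, E y t → ∀ z, E z y → E z t

/-- The reflection scheme RP: for every formula `φ` and every set `x` there is a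
transitive set `t ⊇ x` reflecting `φ`. -/
def RPScheme {M : Type} (E : M → M → Prop) (A : M → Prop) : Prop :=
  ∀ (n : ℕ) (φ : Fml n) (x : M),
    ∃ t, TransSet E A t ∧ (∀ z, E z x → E z t) ∧
      ∀ v : Fin n → M, (∀ i, E (v i) t) →
        (Realize E A φ v ↔ RealizeIn E A t φ v)

/-- The weak reflection scheme RP⁻. -/
def RPMinusScheme {M : Type} (E : M → M → Prop) (A : M → Prop) : Prop :=
  ∀ (n : ℕ) (φ : Fml n) (v : Fin n → M),
    Realize E A φ v →
      ∃ t, TransSet E A t ∧ (∀ i, E (v i) t) ∧ RealizeIn E A t φ v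

/-- `b` is a set of urelements. -/
def IsSetOfUrelements {M : Type} (E : M → M → Prop) (A : M → Prop) (b : M) : Prop :=
  ¬ A b ∧ ∀ x, E x b → A x

/-- `b` and `c` are disjoint. -/
def DisjointM {M : Type} (E : M → M → Prop) (A : M → Prop) (b c : M) : Prop :=
  ∀ z, E z b → ¬ E z c

/-- `p` is the Kuratowski ordered pair `⟨x, y⟩`. -/
def IsKPair {M : Type} (E : M → M → Prop) (A : M → Prop) (x y p : M) : Prop :=
  ¬ A p ∧ ∀ w, E w p ↔
    (¬ A w ∧ ((∀ v, E v w ↔ v = x) ∨ (∀ v, E v w ↔ (v = x ∨ v = y))))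

/-- `y` is a value of the (set-)function `f` at `x`. -/
def FVal {M : Type} (E : M → M → Prop) (A : M → Prop) (f x y : M) : Prop :=
  ∃ p, E p f ∧ IsKPair E A x y p

/-- `f` is a function with domain `d`. -/
def IsFuncOn {M : Type} (E : M → M → Prop) (A : M → Prop) (f d : M) : Prop :=
  ¬ A f ∧ (∀ p, E p f → ∃ x y, E x d ∧ IsKPair E A x y p) ∧
    (∀ x, E x d → ∃ y, FVal E A f x y) ∧
    (∀ x y y', FVal E A f x y → FVal E A f x y' → y = y')

/-- `f` is an injection from `b` into `c`. -/
def IsInjection {M : Type} (E : M → M → Prop) (A : M → Prop) (f b c : M) : Prop :=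
  IsFuncOn E A f b ∧ (∀ x y, FVal E A f x y → E y c) ∧
    (∀ x x' y, FVal E A f x y → FVal E A f x' y → x = x')

/-- `f` is a bijection from `b` onto `c`. -/
def IsBijection {M : Type} (E : M → M → Prop) (A : M → Prop) (f b c : M) : Prop :=
  IsInjection E A f b c ∧ ∀ y, E y c → ∃ x, E x b ∧ FVal E A f x y

/-- `b` and `c` are equinumerous (by an internal bijection). -/
def Equinumerous {M : Type} (E : M → M → Prop) (A : M → Prop) (b c : M) : Prop :=
  ∃ f, IsBijection E A f b c

/-- `u` is related to `v` by the set-relation `r` (a set of ordered pairs). -/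
def RelOf {M : Type} (E : M → M → Prop) (A : M → Prop) (r u v : M) : Prop :=
  ∃ p, E p r ∧ IsKPair E A u v p

/-- `r` is a well-ordering of `x`. -/
def IsWellOrderOn {M : Type} (E : M → M → Prop) (A : M → Prop) (r x : M) : Prop :=
  (∀ u v, RelOf E A r u v → (E u x ∧ E v x)) ∧
    (∀ u, E u x → ¬ RelOf E A r u u) ∧
    (∀ u v w, RelOf E A r u v → RelOf E A r v w → RelOf E A r u w) ∧
    (∀ u v, E u x → E v x → u ≠ v → (RelOf E A r u v ∨ RelOf E A r v u)) ∧
    (∀ s, ¬ A s → (∀ z, E z s → E z x) → (∃ z, E z s) →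
      ∃ m, E m s ∧ ∀ z, E z s → ¬ RelOf E A r z m)

def WellOrderable {M : Type} (E : M → M → Prop) (A : M → Prop) (x : M) : Prop :=
  ∃ r, ¬ A r ∧ IsWellOrderOn E A r x

/-- AC: every set is well-orderable. -/
def AxChoice {M : Type} (E : M → M → Prop) (A : M → Prop) : Prop :=
  ∀ x, ¬ A x → WellOrderable E A x

/-- ZFCU_R = ZFU_R + AC. -/
def ZFCUR {M : Type} (E : M → M → Prop) (A : M → Prop) : Prop :=
  ZFUR E A ∧ AxChoice E A

/-- AC_𝒜: every set of urelements is well-orderable. -/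
def ACA {M : Type} (E : M → M → Prop) (A : M → Prop) : Prop :=
  ∀ b, IsSetOfUrelements E A b → WellOrderable E A b

/-- `o` is a (von Neumann) ordinal: a transitive pure set well-ordered by `∈`. -/
def IsOrdinal {M : Type} (E : M → M → Prop) (A : M → Prop) (o : M) : Prop :=
  TransSet E A o ∧ (∀ x, E x o → TransSet E A x) ∧
    (∀ x y, E x o → E y o → (E x y ∨ x = y ∨ E y x))

/-- `k` is a cardinal: an ordinal not equinumerous with any of its members. -/
def IsCardinal {M : Type} (E : M → M → Prop) (A : M → Prop) (k : M) : Prop :=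
  IsOrdinal E A k ∧ ∀ o, E o k → ¬ Equinumerous E A o k

def IsLimitOrdinal {M : Type} (E : M → M → Prop) (A : M → Prop) (o : M) : Prop :=
  IsOrdinal E A o ∧ (∃ x, E x o) ∧ ∀ x, E x o → ∃ y, E y o ∧ E x y

/-- `k` is an infinite cardinal (a cardinal with a nonzero limit ordinal ≤ it). -/
def IsInfiniteCardinal {M : Type} (E : M → M → Prop) (A : M → Prop) (k : M) : Prop :=
  IsCardinal E A k ∧ ∃ b, (E b k ∨ b = k) ∧ IsLimitOrdinal E A b

/-- `o` is ω, the least nonzero limit ordinal. -/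
def IsOmega {M : Type} (E : M → M → Prop) (A : M → Prop) (o : M) : Prop :=
  IsLimitOrdinal E A o ∧ ∀ x, E x o → ¬ IsLimitOrdinal E A x

/-- The cardinal `k` is realized: some set of urelements is equinumerous with it. -/
def Realized {M : Type} (E : M → M → Prop) (A : M → Prop) (k : M) : Prop :=
  ∃ b, IsSetOfUrelements E A b ∧ Equinumerous E A b k

/-- Plenitude: every cardinal is realized. -/
def Plenitude {M : Type} (E : M → M → Prop) (A : M → Prop) : Prop :=
  ∀ k, IsCardinal E A k → Realized E A k

/-- Plenitude⁺: every set is equinumerous with some set of urelements. -/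
def PlenitudePlus {M : Type} (E : M → M → Prop) (A : M → Prop) : Prop :=
  ∀ x, ¬ A x → ∃ b, IsSetOfUrelements E A b ∧ Equinumerous E A x b

/-- `o` is the supremum (least upper bound in the ordinals) of the set `s`. -/
def IsSupremumOf {M : Type} (E : M → M → Prop) (A : M → Prop) (s o : M) : Prop :=
  IsOrdinal E A o ∧ (∀ k, E k s → (E k o ∨ k = o)) ∧
    ∀ o', IsOrdinal E A o' → (∀ k, E k s → (E k o' ∨ k = o')) → (E o o' ∨ o = o')

/-- Closure: the supremum of a set of realized cardinals is realized. -/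
def ClosureAx {M : Type} (E : M → M → Prop) (A : M → Prop) : Prop :=
  ∀ s, ¬ A s → (∀ k, E k s → IsCardinal E A k ∧ Realized E A k) →
    ∀ o, IsSupremumOf E A s o → Realized E A o

/-- `b` has a duplicate: a disjoint equinumerous set of urelements. -/
def HasDuplicate {M : Type} (E : M → M → Prop) (A : M → Prop) (b : M) : Prop :=
  ∃ c, IsSetOfUrelements E A c ∧ DisjointM E A b c ∧ Equinumerous E A b c

/-- Duplication: every set of urelements has a duplicate. -/
def Duplication {M : Type} (E : M → M → Prop) (A : M → Prop) : Prop :=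
  ∀ b, IsSetOfUrelements E A b → HasDuplicate E A b

/-- Duplication holds over `a`: every set of urelements disjoint from `a` has a
duplicate disjoint from `a`. -/
def DuplicationOver {M : Type} (E : M → M → Prop) (A : M → Prop) (a : M) : Prop :=
  ∀ b, IsSetOfUrelements E A b → DisjointM E A b a →
    ∃ c, IsSetOfUrelements E A c ∧ DisjointM E A c b ∧ DisjointM E A c a ∧
      Equinumerous E A b c

/-- `π` is an automorphism of the universe. -/
def IsAutomorphism {M : Type} (E : M → M → Prop) (A : M → Prop) (π : M ≃ M) : Prop :=
  (∀ x y, E (π x) (π y) ↔ E x y) ∧ (∀ x, A (π x) ↔ A x)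

/-- Homogeneity holds over `a`. -/
def HomogeneityOver {M : Type} (E : M → M → Prop) (A : M → Prop) (a : M) : Prop :=
  ∀ b c, IsSetOfUrelements E A b → IsSetOfUrelements E A c → Equinumerous E A b c →
    DisjointM E A b a → DisjointM E A c a →
    ∃ π : M ≃ M, IsAutomorphism E A π ∧ π b = c ∧ ∀ x, E x a → π x = x

/-- `t` is a tail of `a`. -/
def IsTailOf {M : Type} (E : M → M → Prop) (A : M → Prop) (t a : M) : Prop :=
  IsSetOfUrelements E A t ∧ DisjointM E A t a ∧
    ∀ c, IsSetOfUrelements E A c → DisjointM E A c a → ∃ f, IsInjection E A f c t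

/-- Tail: every set of urelements has a tail. -/
def TailAx {M : Type} (E : M → M → Prop) (A : M → Prop) : Prop :=
  ∀ a, IsSetOfUrelements E A a → ∃ t, IsTailOf E A t a

/-- Tail⁺: every set of urelements has a well-orderable tail. -/
def TailPlus {M : Type} (E : M → M → Prop) (A : M → Prop) : Prop :=
  ∀ a, IsSetOfUrelements E A a → ∃ t, IsTailOf E A t a ∧ WellOrderable E A t

/-- `s` is the restriction `f ↾ a`. -/
def IsRestrictionOf {M : Type} (E : M → M → Prop) (A : M → Prop) (f a s : M) : Prop :=
  ¬ A s ∧ ∀ p, E p s ↔ (E p f ∧ ∃ x y, IsKPair E A x y p ∧ E x a)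

/-- The DC_κ-scheme at the cardinal `k` of the model. -/
def DCSchemeAt {M : Type} (E : M → M → Prop) (A : M → Prop) (k : M) : Prop :=
  ∀ (n : ℕ) (φ : Fml (n + 2)) (p : Fin n → M),
    (∀ x, ∃ y, Realize E A φ (Fin.snoc (Fin.snoc p x) y)) →
    ∃ f, IsFuncOn E A f k ∧ ∀ a, E a k →
      ∃ s t, IsRestrictionOf E A f a s ∧ FVal E A f a t ∧
        Realize E A φ (Fin.snoc (Fin.snoc p s) t)

/-- The DC_ω-scheme. -/
def DComegaScheme {M : Type} (E : M → M → Prop) (A : M → Prop) : Prop :=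
  ∀ o, IsOmega E A o → DCSchemeAt E A o

/-- DC_{<Ord}: the DC_κ-scheme for every infinite cardinal κ. -/
def DCltOrd {M : Type} (E : M → M → Prop) (A : M → Prop) : Prop :=
  ∀ k, IsInfiniteCardinal E A k → DCSchemeAt E A k

/- ### Restriction to a subclass (for inner models) -/

def restrictE {M : Type} (E : M → M → Prop) (D : M → Prop) :
    {x : M // D x} → {x : M // D x} → Prop := fun a b => E a.1 b.1

def restrictA {M : Type} (A : M → Prop) (D : M → Prop) :
    {x : M // D x} → Prop := fun a => A a.1

/-- `t` is the transitive closure of `{x}` (the least transitive set with `x` as member). -/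
def IsTransClosOfSing {M : Type} (E : M → M → Prop) (A : M → Prop) (x t : M) : Prop :=
  TransSet E A t ∧ E x t ∧
    ∀ t', TransSet E A t' → E x t' → ∀ z, E z t → E z t'

/-- `kx` is the kernel of `x`: the set of urelements in the transitive closure of `{x}`. -/
def IsKernelOf {M : Type} (E : M → M → Prop) (A : M → Prop) (x kx : M) : Prop :=
  ¬ A kx ∧ ∃ t, IsTransClosOfSing E A x t ∧ ∀ a, E a kx ↔ (A a ∧ E a t)

/-!
Reflection by a Löwenheim–Skolem chain. Collection gives, for every set `u`, a set containing
witnesses for all existential subformulas of `φ` with parameters from `u`. Such witness sets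
are not unique, so DC_ω is used to choose an ω-sequence of stages, each containing `x`, the
members of the members of all earlier stages, and witnesses over all earlier stages. The union
`T` of the stages is transitive and contains witnesses over itself, so `φ` is absolute for `T`
by the Tarski–Vaught test. Applying the schemes requires the relations involved to be
first-order definable, which follows from the closure properties of `Definable`.
-/

namespace Fml

def rename : {n m : ℕ} → (Fin n → Fin m) → Fml n → Fml m
  | _, _, σ, .mem i j => .mem (σ i) (σ j)
  | _, _, σ, .eq i j => .eq (σ i) (σ j)
  | _, _, σ, .ur i => .ur (σ i)
  | _, _, σ, .not φ => .not (rename σ φ)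
  | _, _, σ, .and φ ψ => .and (rename σ φ) (rename σ ψ)
  | _, _, σ, .ex φ => .ex (rename (Fin.lastCases (Fin.last _) (fun i => (σ i).castSucc)) φ)

end Fml

variable {M : Type} {E : M → M → Prop} {A : M → Prop}

theorem realize_rename {n : ℕ} (φ : Fml n) {m : ℕ} (σ : Fin n → Fin m) (v : Fin m → M) :
    Realize E A (φ.rename σ) v ↔ Realize E A φ (v ∘ σ) := by
  induction φ generalizing m with
  | mem | eq | ur => rfl
  | not φ ih => exact not_congr (ih σ v)
  | and φ ψ ihφ ihψ => exact and_congr (ihφ σ v) (ihψ σ v)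
  | ex φ ih =>
    refine exists_congr fun x => (ih _ _).trans ?_
    congr! 1
    funext i
    induction i using Fin.lastCases <;> simp

theorem comp_natAdd_eq_snoc {n m : ℕ} (v : Fin (n + (m + 1)) → M) :
    v ∘ Fin.natAdd n = Fin.snoc (Fin.init v ∘ Fin.natAdd n) (v (Fin.last (n + m))) := by
  funext i
  induction i using Fin.lastCases <;> simp [Fin.init]

variable (E A) in
/-- `P` is defined by a formula whose first `k` variables are fixed to the parameters `p`. -/
def Definable {n : ℕ} (P : (Fin n → M) → Prop) : Prop :=
  ∃ (k : ℕ) (p : Fin k → M) (φ : Fml (k + n)), ∀ v, P v ↔ Realize E A φ (Fin.append p v)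

section Definability

variable {n : ℕ} {P Q : (Fin n → M) → Prop}

theorem Definable.congr (h : Definable E A P) (hPQ : ∀ v, P v ↔ Q v) : Definable E A Q := by
  obtain ⟨k, p, φ, hφ⟩ := h
  exact ⟨k, p, φ, fun v => (hPQ v).symm.trans (hφ v)⟩

theorem Definable.of_realize (φ : Fml n) : Definable E A (Realize E A φ) :=
  ⟨0, Fin.elim0, φ.rename (Fin.natAdd 0), fun v => by
    rw [realize_rename]; congr!; funext i; simp⟩

theorem Definable.comp {m : ℕ} (h : Definable E A P) (σ : Fin n → Fin m) :
    Definable E A fun v : Fin m → M => P (v ∘ σ) := by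
  obtain ⟨k, p, φ, hφ⟩ := h
  refine ⟨k, p, φ.rename (Fin.append (Fin.castAdd m) (Fin.natAdd k ∘ σ)),
    fun v => (hφ _).trans ?_⟩
  rw [realize_rename]
  congr!
  funext i
  refine Fin.addCases (fun i => ?_) (fun i => ?_) i <;> simp

theorem Definable.not (h : Definable E A P) : Definable E A fun v => ¬ P v := by
  obtain ⟨k, p, φ, hφ⟩ := h
  exact ⟨k, p, φ.not, fun v => not_congr (hφ v)⟩

theorem Definable.and (hP : Definable E A P) (hQ : Definable E A Q) :
    Definable E A fun v => P v ∧ Q v := by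
  obtain ⟨k, p, φ, hφ⟩ := hP
  obtain ⟨l, q, ψ, hψ⟩ := hQ
  refine ⟨k + l, Fin.append p q,
    .and (φ.rename (Fin.append (Fin.castAdd n ∘ Fin.castAdd l) (Fin.natAdd (k + l))))
      (ψ.rename (Fin.append (Fin.castAdd n ∘ Fin.natAdd k) (Fin.natAdd (k + l)))),
    fun v => and_congr ((hφ v).trans ?_) ((hψ v).trans ?_)⟩
  all_goals
    rw [realize_rename]
    congr!
    funext i
    refine Fin.addCases (fun i => ?_) (fun i => ?_) i <;> simp

/- The quantifier rules are stated for `fun v => ∃ x, P v x` rather than for a predicate on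
`Fin (n + 1) → M`, so that `apply_rules` can decompose concrete definability goals. -/
protected theorem Definable.exists {P : (Fin n → M) → M → Prop}
    (h : Definable E A fun v : Fin (n + 1) → M => P (Fin.init v) (v (Fin.last n))) :
    Definable E A fun v => ∃ x, P v x := by
  obtain ⟨k, p, φ, hφ⟩ := h
  refine ⟨k, p, .ex φ, fun v => exists_congr fun x => ?_⟩
  rw [← Fin.append_snoc, ← hφ]
  simp only [Fin.init_snoc, Fin.snoc_last]

theorem Definable.cons_const {P : (Fin (n + 1) → M) → Prop} (h : Definable E A P) (c : M) :
    Definable E A fun v : Fin n → M => P (Fin.cons c v) := by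
  obtain ⟨k, p, φ, hφ⟩ := h
  refine ⟨k + 1, Fin.snoc p c, φ.rename (Fin.cast (Nat.succ_add_eq_add_succ k n).symm),
    fun v => (hφ _).trans ?_⟩
  rw [realize_rename, Fin.append_right_cons]

theorem Definable.mem (i j : Fin n) : Definable E A fun v => E (v i) (v j) :=
  of_realize (.mem i j)

theorem Definable.eq (i j : Fin n) : Definable E A fun v => v i = v j :=
  of_realize (.eq i j)

theorem Definable.ur (i : Fin n) : Definable E A fun v => A (v i) :=
  of_realize (.ur i)

theorem Definable.mem_const (i : Fin n) (c : M) : Definable E A fun v => E (v i) c :=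
  ((mem i.succ 0).cons_const c).congr fun v => by simp

theorem Definable.or (hP : Definable E A P) (hQ : Definable E A Q) :
    Definable E A fun v => P v ∨ Q v :=
  (hP.not.and hQ.not).not.congr fun v => by tauto

theorem Definable.imp (hP : Definable E A P) (hQ : Definable E A Q) :
    Definable E A fun v => P v → Q v :=
  (hP.and hQ.not).not.congr fun v => by tauto

theorem Definable.iff (hP : Definable E A P) (hQ : Definable E A Q) :
    Definable E A fun v => P v ↔ Q v :=
  (hP.imp hQ).and (hQ.imp hP) |>.congr fun v => iff_def.symm

protected theorem Definable.forall {P : (Fin n → M) → M → Prop}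
    (h : Definable E A fun v : Fin (n + 1) → M => P (Fin.init v) (v (Fin.last n))) :
    Definable E A fun v => ∀ x, P v x :=
  (Definable.exists h.not).not.congr fun v => not_exists_not

theorem Definable.true : Definable E A fun _ : Fin n → M => True :=
  (Definable.forall (P := fun _ x => x = x) (eq (Fin.last n) (Fin.last n))).congr
    fun v => by simp

theorem Definable.forall_fin {m : ℕ} {P : Fin m → (Fin n → M) → Prop}
    (h : ∀ i, Definable E A (P i)) : Definable E A fun v => ∀ i, P i v := by
  induction m with
  | zero => exact Definable.true.congr fun v => by simp
  | succ m ih =>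
    exact ((h 0).and (ih fun i => h i.succ)).congr fun v =>
      (Fin.forall_fin_succ (P := fun i => P i v)).symm

theorem Definable.forall_tuple {m : ℕ} {P : (Fin n → M) → (Fin m → M) → Prop}
    (h : Definable E A fun v : Fin (n + m) → M => P (v ∘ Fin.castAdd m) (v ∘ Fin.natAdd n)) :
    Definable E A fun v => ∀ w, P v w := by
  induction m with
  | zero =>
    refine h.congr fun v => ⟨fun hv w => ?_, fun hv => hv _⟩
    rwa [Subsingleton.elim w (v ∘ Fin.natAdd n)]
  | succ m ih =>
    refine (ih (P := fun v w => ∀ x, P v (Fin.snoc w x))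
      (Definable.forall (h.congr fun v => ?_))).congr
      fun v => ⟨fun hv w => ?_, fun hv w x => hv _⟩
    · rw [comp_natAdd_eq_snoc]; rfl
    · simpa using hv (Fin.init w) (w (Fin.last m))

end Definability

section Schemes

theorem SeparationScheme.exists_sep (hSep : SeparationScheme E A) {P : M → Prop}
    (hP : Definable E A fun v : Fin 1 → M => P (v 0)) (x : M) :
    ∃ y, ∀ z, E z y ↔ E z x ∧ P z := by
  obtain ⟨k, p, φ, hφ⟩ := hP
  obtain ⟨y, hy⟩ := hSep k φ p x
  refine ⟨y, fun z => (hy z).trans (and_congr_right' ?_)⟩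
  rw [← Fin.append_right_eq_snoc p fun _ => z]
  exact (hφ _).symm

theorem Definable.exists_realize_snoc_snoc {R : M → M → Prop}
    (hR : Definable E A fun v : Fin 2 → M => R (v 0) (v 1)) :
    ∃ (k : ℕ) (p : Fin k → M) (φ : Fml (k + 2)),
      ∀ a b, R a b ↔ Realize E A φ (Fin.snoc (Fin.snoc p a) b) := by
  obtain ⟨k, p, φ, hφ⟩ := hR
  refine ⟨k, p, φ, fun a b => ?_⟩
  rw [← Fin.append_right_eq_snoc p fun _ => a, ← Fin.append_snoc, ← hφ]
  rfl

theorem CollectionScheme.exists_collect (hColl : CollectionScheme E A) {R : M → M → Prop}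
    (hR : Definable E A fun v : Fin 2 → M => R (v 0) (v 1)) {w : M}
    (h : ∀ x, E x w → ∃ y, R x y) : ∃ c, ∀ x, E x w → ∃ y, E y c ∧ R x y := by
  obtain ⟨k, p, φ, hφ⟩ := hR.exists_realize_snoc_snoc
  simp only [hφ] at h ⊢
  exact hColl k φ p w h

theorem DCSchemeAt.exists_func {κ : M} (hDC : DCSchemeAt E A κ) {R : M → M → Prop}
    (hR : Definable E A fun v : Fin 2 → M => R (v 0) (v 1)) (h : ∀ x, ∃ y, R x y) :
    ∃ f, IsFuncOn E A f κ ∧ ∀ a, E a κ →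
      ∃ s t, IsRestrictionOf E A f a s ∧ FVal E A f a t ∧ R s t := by
  obtain ⟨k, p, φ, hφ⟩ := hR.exists_realize_snoc_snoc
  simp only [hφ] at h ⊢
  exact hDC k φ p h

end Schemes

section BasicSets

variable {x y : M}

theorem not_ur_of_mem (hA : AxiomA E A) (h : E y x) : ¬ A x := fun hx => hA x hx y h

theorem exists_union (hPair : Pairing E A) (hUn : UnionAx E A) (a b : M) :
    ∃ c, ∀ z, E z c ↔ E z a ∨ E z b := by
  obtain ⟨p, hp⟩ := hPair a b
  obtain ⟨c, hc⟩ := hUn p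
  refine ⟨c, fun z => (hc z).trans ⟨?_, ?_⟩⟩
  · rintro ⟨w, hw, hzw⟩
    rcases (hp w).1 hw with rfl | rfl
    exacts [Or.inl hzw, Or.inr hzw]
  · rintro (h | h)
    exacts [⟨a, (hp a).2 (Or.inl rfl), h⟩, ⟨b, (hp b).2 (Or.inr rfl), h⟩]

theorem mem_asymm (hFound : Foundation E A) (hPair : Pairing E A) (hxy : E x y) : ¬ E y x := by
  intro hyx
  obtain ⟨p, hp⟩ := hPair x y
  obtain ⟨w, hw, hmin⟩ := hFound p ⟨x, (hp x).2 (Or.inl rfl)⟩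
  rcases (hp w).1 hw with rfl | rfl
  exacts [hmin y hyx ((hp y).2 (Or.inr rfl)), hmin x hxy ((hp x).2 (Or.inl rfl))]

theorem IsKPair.exists_mem_mem (hA : AxiomA E A) (hPair : Pairing E A) {a b p : M}
    (h : IsKPair E A a b p) : ∃ d, E d p ∧ E a d ∧ E b d := by
  obtain ⟨d, hd⟩ := hPair a b
  exact ⟨d, (h.2 d).2 ⟨not_ur_of_mem hA ((hd a).2 (Or.inl rfl)), Or.inr hd⟩,
    (hd a).2 (Or.inl rfl), (hd b).2 (Or.inr rfl)⟩

end BasicSets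

section NaturalNumbers

variable (E) in
def IsSucc (z z' : M) : Prop := ∀ v, E v z' ↔ E v z ∨ v = z

variable (E A) in
def IsInductive (i : M) : Prop :=
  (∃ y, E y i ∧ ¬ A y ∧ ∀ z, ¬ E z y) ∧ ∀ x, E x i → ∃ u, E u i ∧ IsSucc E x u

variable (E A) in
def IsNat (z : M) : Prop := ∀ i, IsInductive E A i → E z i

variable {y z z' : M}

theorem exists_isSucc (hPair : Pairing E A) (hUn : UnionAx E A) (z : M) :
    ∃ z', IsSucc E z z' := by
  obtain ⟨s, hs⟩ := hPair z z
  obtain ⟨z', hz'⟩ := exists_union hPair hUn z s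
  exact ⟨z', fun v => by rw [hz', hs, or_self]⟩

theorem IsSucc.unique (hA : AxiomA E A) (hExt : Extensionality E A) (h : IsSucc E z z')
    (h' : IsSucc E z y) : z' = y :=
  hExt z' y (not_ur_of_mem hA ((h z).2 (Or.inr rfl))) (not_ur_of_mem hA ((h' z).2 (Or.inr rfl)))
    fun v => (h v).trans (h' v).symm

theorem IsInductive.succ_mem (hA : AxiomA E A) (hExt : Extensionality E A) {i : M}
    (hi : IsInductive E A i) (hz : E z i) (hs : IsSucc E z z') : E z' i := by
  obtain ⟨u, hu, hsu⟩ := hi.2 z hz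
  rwa [hs.unique hA hExt hsu]

theorem isNat_of_empty (hExt : Extensionality E A) (hz : ¬ A z) (hz' : ∀ w, ¬ E w z) :
    IsNat E A z := by
  rintro i ⟨⟨y, hy, hyA, hy'⟩, -⟩
  rwa [hExt z y hz hyA fun w => iff_of_false (hz' w) (hy' w)]

theorem IsNat.succ (hA : AxiomA E A) (hExt : Extensionality E A) (hz : IsNat E A z)
    (hs : IsSucc E z z') : IsNat E A z' :=
  fun i hi => hi.succ_mem hA hExt (hz i hi) hs

theorem definable_isNat {n : ℕ} (j : Fin n) : Definable E A fun v => IsNat E A (v j) := by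
  unfold IsNat IsInductive IsSucc
  apply_rules [Definable.not, Definable.forall, Definable.exists, Definable.imp, Definable.and,
    Definable.or, Definable.iff, Definable.mem, Definable.eq, Definable.ur]

theorem isNat_induction (h : ZU E A) {P : M → Prop}
    (hP : Definable E A fun v : Fin 1 → M => P (v 0))
    (zero : ∀ e, ¬ A e → (∀ w, ¬ E w e) → P e)
    (succ : ∀ z z', IsNat E A z → IsSucc E z z' → P z → P z') (hz : IsNat E A z) : P z := by
  obtain ⟨hA, hExt, -, -, -, -, ⟨s, hs⟩, hSep⟩ := h
  obtain ⟨b, hb⟩ :=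
    hSep.exists_sep (P := fun z => IsNat E A z ∧ P z) ((definable_isNat 0).and hP) s
  have hbi : IsInductive E A b := by
    refine ⟨?_, fun x hx => ?_⟩
    · obtain ⟨e, he, heA, he'⟩ := hs.1
      exact ⟨e, (hb e).2 ⟨he, isNat_of_empty hExt heA he', zero e heA he'⟩, heA, he'⟩
    · obtain ⟨hxs, hxN, hxP⟩ := (hb x).1 hx
      obtain ⟨u, hu, hxu⟩ := hs.2 x hxs
      exact ⟨u, (hb u).2 ⟨hu, hxN.succ hA hExt hxu, succ x u hxN hxu hxP⟩, hxu⟩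
  exact ((hb z).1 (hz b hbi)).2.2

theorem IsNat.of_mem (h : ZU E A) (hz : IsNat E A z) : ∀ y, E y z → IsNat E A y := by
  refine isNat_induction h (P := fun z => ∀ y, E y z → IsNat E A y) ?_
    (fun e _ he y hy => absurd hy (he y)) (fun z z' hz hs ih y hy => ?_) hz
  · apply_rules [definable_isNat, Definable.not, Definable.forall, Definable.imp, Definable.mem]
  · rcases (hs y).1 hy with hy | rfl
    exacts [ih y hy, hz]

theorem IsNat.transSet (h : ZU E A) (hz : IsNat E A z) : TransSet E A z := by
  refine isNat_induction h (P := TransSet E A) ?_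
    (fun e he he' => ⟨he, fun y hy => absurd hy (he' y)⟩) (fun z z' _ hs ih => ?_) hz
  · unfold TransSet
    apply_rules [Definable.not, Definable.forall, Definable.imp, Definable.and, Definable.mem,
      Definable.ur]
  · refine ⟨not_ur_of_mem h.1 ((hs z).2 (Or.inr rfl)), fun y hy w hw => (hs w).2 (Or.inl ?_)⟩
    rcases (hs y).1 hy with hy | rfl
    exacts [ih.2 y hy w hw, hw]

theorem IsNat.empty_or_isSucc (h : ZU E A) (hz : IsNat E A z) :
    (∀ w, ¬ E w z) ∨ ∃ y, IsSucc E y z := by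
  refine isNat_induction h (P := fun z => (∀ w, ¬ E w z) ∨ ∃ y, IsSucc E y z) ?_
    (fun e _ he => Or.inl he) (fun z z' _ hs _ => Or.inr ⟨z, hs⟩) hz
  unfold IsSucc
  apply_rules [Definable.not, Definable.forall, Definable.exists, Definable.or, Definable.iff,
    Definable.mem, Definable.eq]

theorem IsNat.empty_eq_or_mem (h : ZU E A) (hz : IsNat E A z) {e : M} (he : ¬ A e)
    (he' : ∀ w, ¬ E w e) : e = z ∨ E e z := by
  refine isNat_induction h
    (P := fun z => ∀ e, ¬ A e → (∀ w, ¬ E w e) → e = z ∨ E e z) ?_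
    (fun z hz hz' e he he' => Or.inl (h.2.1 e z he hz fun w => iff_of_false (he' w) (hz' w)))
    (fun z z' _ hs ih e he he' => Or.inr ((hs e).2 (ih e he he').symm)) hz e he he'
  apply_rules [Definable.not, Definable.forall, Definable.imp, Definable.or, Definable.mem,
    Definable.eq, Definable.ur]

theorem IsNat.succ_mem_or_eq (h : ZU E A) (hz : IsNat E A z) :
    ∀ y, E y z → ∀ w, IsSucc E y w → E w z ∨ w = z := by
  refine isNat_induction h
    (P := fun z => ∀ y, E y z → ∀ w, IsSucc E y w → E w z ∨ w = z) ?_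
    (fun e _ he y hy => absurd hy (he y)) (fun z z' _ hs ih y hy w hw => ?_) hz
  · unfold IsSucc
    apply_rules [Definable.not, Definable.forall, Definable.imp, Definable.or, Definable.iff,
      Definable.mem, Definable.eq]
  · rcases (hs y).1 hy with hy | rfl
    · exact Or.inl ((hs w).2 (ih y hy w hw))
    · exact Or.inr (hw.unique h.1 h.2.1 hs)

theorem IsNat.trichotomous (h : ZU E A) (hz : IsNat E A z) (hy : IsNat E A y) :
    E y z ∨ y = z ∨ E z y := by
  refine isNat_induction h (P := fun z => ∀ y, IsNat E A y → E y z ∨ y = z ∨ E z y) ?_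
    (fun e he he' y hy => ?_) (fun z z' _ hs ih y hy => ?_) hz y hy
  · apply_rules [definable_isNat, Definable.not, Definable.forall, Definable.imp, Definable.or,
      Definable.mem, Definable.eq]
  · exact Or.inr ((hy.empty_eq_or_mem h he he').imp Eq.symm id)
  · rcases ih y hy with hyz | rfl | hzy
    · exact Or.inl ((hs y).2 (Or.inl hyz))
    · exact Or.inl ((hs y).2 (Or.inr rfl))
    · exact (hy.succ_mem_or_eq h z hzy z' hs).elim (fun h => Or.inr (Or.inr h))
        fun h => Or.inr (Or.inl h.symm)

theorem exists_isOmega (h : ZU E A) : ∃ o, IsOmega E A o := by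
  obtain ⟨hA, hExt, hFound, hPair, hUn, -, ⟨s, hs⟩, hSep⟩ := id h
  obtain ⟨o, ho⟩ := hSep.exists_sep (definable_isNat 0) s
  have ho' : ∀ z, E z o ↔ IsNat E A z := fun z =>
    (ho z).trans ⟨And.right, fun hz => ⟨hz s hs, hz⟩⟩
  obtain ⟨e, -, heA, he⟩ := hs.1
  have heo : E e o := (ho' e).2 (isNat_of_empty hExt heA he)
  have hord : IsOrdinal E A o :=
    ⟨⟨not_ur_of_mem hA heo, fun y hy z hz => (ho' z).2 (((ho' y).1 hy).of_mem h z hz)⟩,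
      fun x hx => ((ho' x).1 hx).transSet h,
      fun x y hx hy => ((ho' y).1 hy).trichotomous h ((ho' x).1 hx)⟩
  refine ⟨o, ⟨hord, ⟨e, heo⟩, fun x hx => ?_⟩, fun x hx hlim => ?_⟩
  · obtain ⟨x', hx'⟩ := exists_isSucc hPair hUn x
    exact ⟨x', (ho' x').2 (((ho' x).1 hx).succ hA hExt hx'), (hx' x).2 (Or.inr rfl)⟩
  · obtain ⟨-, ⟨w, hw⟩, hlim⟩ := hlim
    rcases ((ho' x).1 hx).empty_or_isSucc h with hx0 | ⟨y, hy⟩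
    · exact hx0 w hw
    · obtain ⟨u, hu, hyu⟩ := hlim y ((hy y).2 (Or.inr rfl))
      rcases (hy u).1 hu with huy | rfl
      exacts [mem_asymm hFound hPair hyu huy, mem_asymm hFound hPair hyu hyu]

end NaturalNumbers

section Covers

variable (E) in
def Covers {m : ℕ} (P : (Fin (m + 1) → M) → Prop) (u t : M) : Prop :=
  ∀ w : Fin m → M, (∀ i, E (w i) u) → (∃ x, P (Fin.snoc w x)) →
    ∃ x, E x t ∧ P (Fin.snoc w x)

variable {m : ℕ} {P : (Fin (m + 1) → M) → Prop} {u t t' : M}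

theorem Covers.mono (h : Covers E P u t) (ht : ∀ z, E z t → E z t') : Covers E P u t' :=
  fun w hw hP => (h w hw hP).imp fun _ hx => ⟨ht _ hx.1, hx.2⟩

theorem covers_succ_iff {P : (Fin (m + 1 + 1) → M) → Prop} :
    Covers E P u t ↔ ∀ a, E a u → Covers E (fun V => P (Fin.cons a V)) u t := by
  simp only [Covers, Fin.forall_fin_succ_pi (P := fun w : Fin (m + 1) → M => _ → _),
    Fin.forall_fin_succ, Fin.cons_zero, Fin.cons_succ, ← Fin.cons_snoc_eq_snoc_cons]
  exact forall_congr' fun a => ⟨fun h ha w hw => h w ⟨ha, hw⟩, fun h w hw => h hw.1 w hw.2⟩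

theorem Definable.covers {n : ℕ} {P : (Fin n → M) → (Fin (m + 1) → M) → Prop}
    (hP : Definable E A fun V : Fin (n + (m + 1)) → M =>
      P (V ∘ Fin.castAdd (m + 1)) (V ∘ Fin.natAdd n))
    (i j : Fin n) : Definable E A fun v => Covers E (P v) (v i) (v j) := by
  refine forall_tuple (P := fun v w => (∀ l, E (w l) (v i)) → (∃ x, P v (Fin.snoc w x)) →
    ∃ x, E x (v j) ∧ P v (Fin.snoc w x)) ?_
  have hP' : Definable E A fun V : Fin (n + m + 1) → M =>
      P (Fin.init V ∘ Fin.castAdd m)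
        (Fin.snoc (Fin.init V ∘ Fin.natAdd n) (V (Fin.last _))) := by
    refine hP.congr fun V => ?_
    rw [comp_natAdd_eq_snoc]; rfl
  exact (forall_fin fun l => mem _ _).imp
    ((Definable.exists hP').imp (Definable.exists ((mem _ _).and hP')))

theorem Definable.covers_cons {P : (Fin (m + 1 + 1) → M) → Prop} (hP : Definable E A P)
    (u : M) :
    Definable E A fun v : Fin 2 → M => Covers E (fun V => P (Fin.cons (v 0) V)) u (v 1) := by
  have hP' : Definable E A fun V : Fin (3 + (m + 1)) → M =>
      P (Fin.cons ((V ∘ Fin.castAdd (m + 1)) 1) (V ∘ Fin.natAdd 3)) :=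
    (hP.comp (Fin.cons (Fin.castAdd (m + 1) 1) (Fin.natAdd 3))).congr fun V => by
      rw [Fin.comp_cons]; rfl
  exact ((hP'.covers (P := fun v W => P (Fin.cons (v 1) W)) 0 2).cons_const u).congr
    fun v => Iff.rfl

/-- Collection for tuples: by induction on the length, collecting over one coordinate at a
time. -/
theorem exists_covers (hPair : Pairing E A) (hUn : UnionAx E A) (hColl : CollectionScheme E A) :
    ∀ {m : ℕ} {P : (Fin (m + 1) → M) → Prop}, Definable E A P →
      ∀ u, ∃ t, Covers E P u t
  | 0, P, _, u => by
    by_cases hP : ∃ x, P (Fin.snoc Fin.elim0 x)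
    · obtain ⟨x, hx⟩ := hP
      obtain ⟨t, ht⟩ := hPair x x
      exact ⟨t, fun w _ _ =>
        ⟨x, (ht x).2 (Or.inl rfl), by rwa [Subsingleton.elim w Fin.elim0]⟩⟩
    · exact ⟨u, fun w _ hw => absurd (by rwa [Subsingleton.elim w Fin.elim0] at hw) hP⟩
  | m + 1, P, hP, u => by
    obtain ⟨c, hc⟩ := hColl.exists_collect (hP.covers_cons u)
      fun a _ => exists_covers hPair hUn hColl (hP.cons_const a) u
    obtain ⟨t, ht⟩ := hUn c
    refine ⟨t, covers_succ_iff.2 fun a ha => ?_⟩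
    obtain ⟨y, hy, hcov⟩ := hc a ha
    exact hcov.mono fun z hz => (ht z).2 ⟨y, hy, hz⟩

end Covers

section Witnesses

variable (E A) in
def HasWitnesses (u t : M) : ∀ {n : ℕ}, Fml n → Prop
  | _, .mem _ _ | _, .eq _ _ | _, .ur _ => True
  | _, .not φ => HasWitnesses u t φ
  | _, .and φ ψ => HasWitnesses u t φ ∧ HasWitnesses u t ψ
  | _, .ex φ => HasWitnesses u t φ ∧ Covers E (Realize E A φ) u t

variable {u t t' T : M}

theorem HasWitnesses.mono {n : ℕ} {φ : Fml n} (h : HasWitnesses E A u t φ)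
    (ht : ∀ z, E z t → E z t') : HasWitnesses E A u t' φ := by
  induction φ with
  | mem | eq | ur => trivial
  | not φ ih => exact ih h
  | and φ ψ ihφ ihψ => exact ⟨ihφ h.1, ihψ h.2⟩
  | ex φ ih => exact ⟨ih h.1, h.2.mono ht⟩

theorem definable_hasWitnesses {k : ℕ} (φ : Fml k) {n : ℕ} (i j : Fin n) :
    Definable E A fun v => HasWitnesses E A (v i) (v j) φ := by
  induction φ with
  | mem | eq | ur => exact Definable.true
  | not φ ih => exact ih
  | and φ ψ ihφ ihψ => exact ihφ.and ihψ
  | ex φ ih =>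
    exact ih.and
      (Definable.covers (P := fun _ => Realize E A φ) ((Definable.of_realize φ).comp _) i j)

theorem exists_hasWitnesses (hPair : Pairing E A) (hUn : UnionAx E A)
    (hColl : CollectionScheme E A) {n : ℕ} (φ : Fml n) (u : M) :
    ∃ t, HasWitnesses E A u t φ := by
  induction φ with
  | mem | eq | ur => exact ⟨u, trivial⟩
  | not φ ih => exact ih
  | and φ ψ ihφ ihψ =>
    obtain ⟨⟨t₁, h₁⟩, ⟨t₂, h₂⟩⟩ := And.intro ihφ ihψ
    obtain ⟨t, ht⟩ := exists_union hPair hUn t₁ t₂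
    exact ⟨t, h₁.mono fun z hz => (ht z).2 (Or.inl hz),
      h₂.mono fun z hz => (ht z).2 (Or.inr hz)⟩
  | ex φ ih =>
    obtain ⟨t₁, h₁⟩ := ih
    obtain ⟨t₂, h₂⟩ := exists_covers hPair hUn hColl (Definable.of_realize φ) u
    obtain ⟨t, ht⟩ := exists_union hPair hUn t₁ t₂
    exact ⟨t, h₁.mono fun z hz => (ht z).2 (Or.inl hz),
      h₂.mono fun z hz => (ht z).2 (Or.inr hz)⟩

theorem HasWitnesses.of_directed {ι : Type} {u t : ι → M} {n : ℕ} {φ : Fml n}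
    (h : ∀ a, HasWitnesses E A (u a) (t a) φ) (ht : ∀ a z, E z (t a) → E z T)
    (hu : ∀ (m : ℕ) (w : Fin m → M), (∀ i, E (w i) T) → ∃ a, ∀ i, E (w i) (u a)) :
    HasWitnesses E A T T φ := by
  induction φ with
  | mem | eq | ur => trivial
  | not φ ih => exact ih h
  | and φ ψ ihφ ihψ => exact ⟨ihφ fun a => (h a).1, ihψ fun a => (h a).2⟩
  | ex φ ih =>
    refine ⟨ih fun a => (h a).1, fun w hw hex => ?_⟩
    obtain ⟨a, ha⟩ := hu _ w hw
    obtain ⟨x, hx, hφ⟩ := (h a).2 w ha hex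
    exact ⟨x, ht a x hx, hφ⟩

theorem realize_iff_realizeIn {n : ℕ} {φ : Fml n} (h : HasWitnesses E A T T φ) (v : Fin n → M)
    (hv : ∀ i, E (v i) T) : Realize E A φ v ↔ RealizeIn E A T φ v := by
  induction φ with
  | mem | eq | ur => rfl
  | not φ ih => exact not_congr (ih h v hv)
  | and φ ψ ihφ ihψ => exact and_congr (ihφ h.1 v hv) (ihψ h.2 v hv)
  | ex φ ih =>
    have hv' : ∀ x, E x T → ∀ i, E ((Fin.snoc v x : Fin _ → M) i) T := fun x hx i => by
      induction i using Fin.lastCases <;> simp [hx, hv]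
    refine ⟨fun hex => ?_, fun ⟨x, hx, hφ⟩ => ⟨x, (ih h.1 _ (hv' x hx)).2 hφ⟩⟩
    obtain ⟨x, hx, hφ⟩ := h.2 v hv hex
    exact ⟨x, hx, (ih h.1 _ (hv' x hx)).1 hφ⟩

end Witnesses

section Reflection

variable (E) in
def IsTripleUnion (s u : M) : Prop :=
  ∀ z, E z u ↔ ∃ p, E p s ∧ ∃ d, E d p ∧ ∃ c, E c d ∧ E z c

theorem exists_isTripleUnion (hUn : UnionAx E A) (s : M) : ∃ u, IsTripleUnion E s u := by
  obtain ⟨u₁, h₁⟩ := hUn s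
  obtain ⟨u₂, h₂⟩ := hUn u₁
  obtain ⟨u₃, h₃⟩ := hUn u₂
  refine ⟨u₃, fun z => (h₃ z).trans ⟨?_, ?_⟩⟩
  · rintro ⟨c, hc, hzc⟩
    obtain ⟨d, hd, hcd⟩ := (h₂ c).1 hc
    obtain ⟨p, hp, hdp⟩ := (h₁ d).1 hd
    exact ⟨p, hp, d, hdp, c, hcd, hzc⟩
  · rintro ⟨p, hp, d, hdp, c, hcd, hzc⟩
    exact ⟨c, (h₂ c).2 ⟨d, (h₁ d).2 ⟨p, hp, hdp⟩, hcd⟩, hzc⟩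

variable {n : ℕ} (φ : Fml n) (x : M)

variable (E A) in
/-- Used with `s = f ↾ a`: then `u = ⋃⋃⋃ s` includes every earlier stage `f b`, `b ∈ a`,
and the new stage `t` contains `x`, the members of the members of `u` (so that the union of
the stages is transitive), and witnesses for `φ` over `u`. -/
def ReflectionStep (s t : M) : Prop :=
  ∃ u, IsTripleUnion E s u ∧ (∀ z, E z x → E z t) ∧
    (∀ y, E y u → ∀ z, E z y → E z t) ∧ HasWitnesses E A u t φ

theorem definable_reflectionStep :
    Definable E A fun v : Fin 2 → M => ReflectionStep E A φ x (v 0) (v 1) := by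
  unfold ReflectionStep IsTripleUnion
  apply_rules [definable_hasWitnesses, Definable.not, Definable.forall, Definable.exists,
    Definable.imp, Definable.and, Definable.iff, Definable.mem, Definable.mem_const]

theorem exists_reflectionStep (hPair : Pairing E A) (hUn : UnionAx E A)
    (hColl : CollectionScheme E A) (s : M) : ∃ t, ReflectionStep E A φ x s t := by
  obtain ⟨u, hu⟩ := exists_isTripleUnion hUn s
  obtain ⟨u', hu'⟩ := hUn u
  obtain ⟨t₀, ht₀⟩ := exists_hasWitnesses hPair hUn hColl φ u
  obtain ⟨t₁, ht₁⟩ := exists_union hPair hUn x u'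
  obtain ⟨t, ht⟩ := exists_union hPair hUn t₁ t₀
  refine ⟨t, u, hu, fun z hz => (ht z).2 (Or.inl ((ht₁ z).2 (Or.inl hz))),
    fun y hy z hz => (ht z).2 (Or.inl ((ht₁ z).2 (Or.inr ((hu' z).2 ⟨y, hy, hz⟩)))),
    ht₀.mono fun z hz => (ht z).2 (Or.inr hz)⟩

end Reflection

section Chain

variable {o f T : M}

theorem IsLimitOrdinal.exists_upper_bound (ho : IsLimitOrdinal E A o) :
    ∀ {m : ℕ} (b : Fin m → M), (∀ i, E (b i) o) → ∃ a, E a o ∧ ∀ i, E (b i) a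
  | 0, _, _ => ho.2.1.imp fun _ ha => ⟨ha, fun i => i.elim0⟩
  | m + 1, b, hb => by
    obtain ⟨a, ha, hba⟩ := ho.exists_upper_bound (Fin.init b) fun i => hb _
    have hlast := hb (Fin.last m)
    obtain ⟨c, hc, hac⟩ := ho.2.2 _ hlast
    have hc_tr := (ho.1.2.1 c hc).2
    rcases ho.1.2.2 _ _ hlast ha with hlt | heq | hgt
    · exact ⟨a, ha, Fin.lastCases hlt hba⟩
    · subst heq
      exact ⟨c, hc, Fin.lastCases hac fun i => hc_tr _ hac _ (hba i)⟩
    · exact ⟨c, hc, Fin.lastCases hac fun i => hc_tr _ (hc_tr _ hac _ hgt) _ (hba i)⟩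

theorem IsTripleUnion.mem_of_isKPair (hA : AxiomA E A) (hPair : Pairing E A)
    (hT : IsTripleUnion E f T) {p a b z : M} (hp : E p f) (hab : IsKPair E A a b p)
    (hz : E z a ∨ E z b) : E z T := by
  obtain ⟨d, hd, had, hbd⟩ := hab.exists_mem_mem hA hPair
  rcases hz with hz | hz
  exacts [(hT z).2 ⟨p, hp, d, hd, a, had, hz⟩, (hT z).2 ⟨p, hp, d, hd, b, hbd, hz⟩]

theorem IsTripleUnion.exists_mem_restrict (hf : IsFuncOn E A f o) (hT : IsTripleUnion E f T)
    {z : M} (hz : E z T) : ∃ b, E b o ∧ ∀ a s u, E b a → IsRestrictionOf E A f a s →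
      IsTripleUnion E s u → E z u := by
  obtain ⟨p, hp, d, hdp, c, hcd, hzc⟩ := (hT z).1 hz
  obtain ⟨b, y, hb, hby⟩ := hf.2.1 p hp
  exact ⟨b, hb, fun a s u hba hs hu =>
    (hu z).2 ⟨p, (hs.2 p).2 ⟨hp, b, y, hby, hba⟩, d, hdp, c, hcd, hzc⟩⟩

theorem reflection_of_chain (hA : AxiomA E A) (hPair : Pairing E A) {n : ℕ} {φ : Fml n} {x : M}
    (ho : IsLimitOrdinal E A o) (hf : IsFuncOn E A f o)
    (hstep : ∀ a, E a o → ∃ s t, IsRestrictionOf E A f a s ∧ FVal E A f a t ∧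
      ReflectionStep E A φ x s t)
    (hT : IsTripleUnion E f T) :
    TransSet E A T ∧ (∀ z, E z x → E z T) ∧
      ∀ v : Fin n → M, (∀ i, E (v i) T) → (Realize E A φ v ↔ RealizeIn E A T φ v) := by
  choose s t hs hft u hu hxt hut hW using hstep
  have htT : ∀ a ha z, E z (t a ha) → E z T := fun a ha z hz =>
    let ⟨_, hp, hkp⟩ := hft a ha
    hT.mem_of_isKPair hA hPair hp hkp (Or.inr hz)
  have huT : ∀ z, E z T → ∃ b, E b o ∧ ∀ a (ha : E a o), E b a → E z (u a ha) :=
    fun z hz =>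
    let ⟨b, hb, h⟩ := hT.exists_mem_restrict hf hz
    ⟨b, hb, fun a ha hba => h a _ _ hba (hs a ha) (hu a ha)⟩
  obtain ⟨a₀, ha₀⟩ := ho.2.1
  obtain ⟨a₁, ha₁, ha₀₁⟩ := ho.2.2 a₀ ha₀
  have hnotA : ¬ A T := by
    obtain ⟨p, hp, hkp⟩ := hft a₁ ha₁
    exact not_ur_of_mem hA (hT.mem_of_isKPair hA hPair hp hkp (Or.inl ha₀₁))
  refine ⟨⟨hnotA, fun y hy z hz => ?_⟩,
    fun z hz => htT a₀ ha₀ z (hxt a₀ ha₀ z hz), ?_⟩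
  · obtain ⟨b, hb, hbu⟩ := huT y hy
    obtain ⟨a, ha, hba⟩ := ho.2.2 b hb
    exact htT a ha z (hut a ha y (hbu a ha hba) z hz)
  · refine realize_iff_realizeIn (HasWitnesses.of_directed (ι := {a // E a o})
      (fun a => hW a.1 a.2) (fun a => htT a.1 a.2) fun m w hw => ?_)
    choose b hb hbu using fun i => huT (w i) (hw i)
    obtain ⟨a, ha, hba⟩ := ho.exists_upper_bound b hb
    exact ⟨⟨a, ha⟩, fun i => hbu i a ha (hba i)⟩

end Chain

/-- Every model of ZFU_R satisfying every instance of the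
DC_ω-scheme and every instance of the Collection scheme also satisfies every
instance of the reflection scheme RP. -/
theorem zfur_dcomega_collection_implies_rp {M : Type} (E : M → M → Prop) (A : M → Prop)
    (hZFUR : ZFUR E A) (hDC : DComegaScheme E A) (hColl : CollectionScheme E A) :
    RPScheme E A := by
  obtain ⟨hZU, -⟩ := hZFUR
  obtain ⟨hA, -, -, hPair, hUn, -⟩ := id hZU
  intro n φ x
  obtain ⟨o, ho⟩ := exists_isOmega hZU
  obtain ⟨f, hf, hstep⟩ := (hDC o ho).exists_func (definable_reflectionStep φ x)
    (exists_reflectionStep φ x hPair hUn hColl)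
  obtain ⟨T, hT⟩ := exists_isTripleUnion hUn f
  exact ⟨T, reflection_of_chain hA hPair ho.1 hf hstep hT⟩

end Urelements
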